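/- arXiv:2206.14740 — 7 statements merged into one kernel-verified Lean document; each statement's English description precedes it below -/
import Mathlib

section
/- For positive integers a, b with b ≤ a and prime power q, the Gaussian binomial coefficient [a choose b]_q is strictly less than q^{b(a-b)} / ∏_{i=1}^∞ (1 - q^{-i}). -/
/-!
Each factor satisfies `(q^a - q^j)/(q^b - q^j) < q^a/(q^b - q^j) = q^(a-b)/(1 - q^-(b-j))`, so the
Gaussian binomial is strictly below `q^(b(a-b)) / ∏_{i=1}^b (1 - q^-i)`. The factors `1 - q^-i`
lie in `(0, 1]` and `∑ q^-i` converges, so the infinite product is positive and at most any of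
its partial products.
-/

open Finset Filter

theorem Multipliable.tprod_le_prod_range_of_le_one {f : ℕ → ℝ} (hf : Multipliable f)
    (h0 : ∀ i, 0 ≤ f i) (h1 : ∀ i, f i ≤ 1) (k : ℕ) :
    ∏' i, f i ≤ ∏ i ∈ range k, f i := by
  refine le_of_tendsto hf.hasProd.tendsto_prod_nat (eventually_atTop.2 ⟨k, fun n hkn => ?_⟩)
  rw [← prod_range_mul_prod_Ico f hkn]
  exact mul_le_of_le_one_right (prod_nonneg fun i _ => h0 i)
    (prod_le_one (fun i _ => h0 i) fun i _ => h1 i)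

namespace Real

variable {r : ℝ}

theorem one_sub_pow_succ_pos (hr : |r| < 1) (i : ℕ) : 0 < 1 - r ^ (i + 1) := by
  refine sub_pos.2 ((le_abs_self _).trans_lt ?_)
  rw [abs_pow]
  exact pow_lt_one₀ (abs_nonneg r) hr i.succ_ne_zero

theorem summable_norm_neg_pow_succ (hr : |r| < 1) : Summable fun i : ℕ => ‖-r ^ (i + 1)‖ := by
  simpa [norm_pow] using (summable_nat_add_iff 1).mpr
    (summable_geometric_of_lt_one (norm_nonneg r) (by simpa using hr))

theorem multipliable_one_sub_pow (hr : |r| < 1) : Multipliable fun i : ℕ => 1 - r ^ (i + 1) := by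
  simpa [sub_eq_add_neg] using multipliable_one_add_of_summable (summable_norm_neg_pow_succ hr)

theorem tprod_one_sub_pow_pos (hr : |r| < 1) : 0 < ∏' i : ℕ, (1 - r ^ (i + 1)) := by
  refine (tprod_nonneg fun i => (one_sub_pow_succ_pos hr i).le).lt_of_ne' ?_
  simpa [sub_eq_add_neg] using tprod_one_add_ne_zero_of_summable
    (fun i => by simpa [← sub_eq_add_neg] using (one_sub_pow_succ_pos hr i).ne')
    (summable_norm_neg_pow_succ hr)

end Real

section GaussianFactor

variable {q : ℝ} {a b j : ℕ}

theorem pow_div_pow_sub_pow_eq (hq : q ≠ 0) (hjb : j ≤ b) (hba : b ≤ a) :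
    q ^ a / (q ^ b - q ^ j) = q ^ (a - b) / (1 - q⁻¹ ^ (b - j)) := by
  have hqb : q ^ b - q ^ j = (1 - q⁻¹ ^ (b - j)) * q ^ b := by
    rw [sub_mul, one_mul, inv_pow, inv_mul_eq_div, div_eq_mul_inv,
      ← pow_sub₀ q hq (Nat.sub_le b j), Nat.sub_sub_self hjb]
  rw [hqb, ← pow_sub_mul_pow q hba, mul_div_mul_right _ _ (pow_ne_zero b hq)]

theorem gaussian_factor_pos (hq : 1 < q) (hjb : j < b) (hba : b ≤ a) :
    0 < (q ^ a - q ^ j) / (q ^ b - q ^ j) :=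
  div_pos (sub_pos.2 (pow_lt_pow_right₀ hq (hjb.trans_le hba)))
    (sub_pos.2 (pow_lt_pow_right₀ hq hjb))

theorem gaussian_factor_lt (hq : 1 < q) (hjb : j < b) (hba : b ≤ a) :
    (q ^ a - q ^ j) / (q ^ b - q ^ j) < q ^ (a - b) / (1 - q⁻¹ ^ (b - j)) := by
  rw [← pow_div_pow_sub_pow_eq (by positivity) hjb.le hba]
  gcongr
  · exact sub_pos.2 (pow_lt_pow_right₀ hq hjb)
  · exact sub_lt_self _ (by positivity)

theorem prod_gaussian_factor_lt (hq : 1 < q) (hb : 0 < b) (hba : b ≤ a) :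
    ∏ j ∈ range b, (q ^ a - q ^ j) / (q ^ b - q ^ j)
      < q ^ (b * (a - b)) / ∏ i ∈ range b, (1 - q⁻¹ ^ (i + 1)) := by
  have hreflect :
      ∏ j ∈ range b, (1 - q⁻¹ ^ (b - j)) = ∏ i ∈ range b, (1 - q⁻¹ ^ (i + 1)) := by
    rw [← prod_range_reflect (fun i => 1 - q⁻¹ ^ (i + 1)) b]
    refine prod_congr rfl fun j hj => ?_
    rw [mem_range] at hj
    congr 2
    omega
  calc ∏ j ∈ range b, (q ^ a - q ^ j) / (q ^ b - q ^ j)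
      < ∏ j ∈ range b, q ^ (a - b) / (1 - q⁻¹ ^ (b - j)) :=
        prod_lt_prod_of_nonempty (fun j hj => gaussian_factor_pos hq (mem_range.1 hj) hba)
          (fun j hj => gaussian_factor_lt hq (mem_range.1 hj) hba) (nonempty_range_iff.2 hb.ne')
    _ = q ^ (b * (a - b)) / ∏ i ∈ range b, (1 - q⁻¹ ^ (i + 1)) := by
        rw [prod_div_distrib, prod_const, card_range, ← pow_mul, mul_comm, hreflect]

end GaussianFactor

theorem gaussian_binomial_lt_general (q a b : ℕ)
    (hq : ∃ p n : ℕ, p.Prime ∧ 0 < n ∧ q = p ^ n)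
    (hb : 0 < b) (hba : b ≤ a) :
    (∏ j ∈ Finset.range b, (((q : ℝ) ^ a - (q : ℝ) ^ j) / ((q : ℝ) ^ b - (q : ℝ) ^ j)))
      < (q : ℝ) ^ (b * (a - b)) / ∏' i : ℕ, (1 - ((q : ℝ))⁻¹ ^ (i + 1)) := by
  obtain ⟨p, n, hp, hn, rfl⟩ := hq
  have hq1 : (1 : ℝ) < ((p ^ n : ℕ) : ℝ) := by exact_mod_cast Nat.one_lt_pow hn.ne' hp.one_lt
  have hr0 : 0 ≤ ((p ^ n : ℕ) : ℝ)⁻¹ := by positivity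
  have hr : |((p ^ n : ℕ) : ℝ)⁻¹| < 1 := by
    rw [abs_of_nonneg hr0]
    exact inv_lt_one_of_one_lt₀ hq1
  calc _ < _ := prod_gaussian_factor_lt hq1 hb hba
    _ ≤ _ := by
      gcongr
      · exact Real.tprod_one_sub_pow_pos hr
      · exact (Real.multipliable_one_sub_pow hr).tprod_le_prod_range_of_le_one
          (fun i => (Real.one_sub_pow_succ_pos hr i).le) (fun i => sub_le_self _ (by positivity)) b

/-- For positive integers `a, b` with `b ≤ a` and a prime power `q`, the Gaussian binomial
coefficient `[a choose b]_q = ∏_{j=0}^{b-1} (q^a - q^j)/(q^b - q^j)` is strictly less than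
`q^{b(a-b)} / ∏_{i=1}^∞ (1 - q^{-i})`. -/
theorem gaussian_binomial_lt (q a b : ℕ)
    (hq : ∃ p n : ℕ, p.Prime ∧ 0 < n ∧ q = p ^ n)
    (ha : 0 < a) (hb : 0 < b) (hba : b ≤ a) :
    (∏ j ∈ Finset.range b, (((q : ℝ) ^ a - (q : ℝ) ^ j) / ((q : ℝ) ^ b - (q : ℝ) ^ j)))
      < (q : ℝ) ^ (b * (a - b)) / ∏' i : ℕ, (1 - ((q : ℝ))⁻¹ ^ (i + 1)) :=
  gaussian_binomial_lt_general q a b hq hb hba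
end

section
/- Let U be an [n,k]_{q^m/q} system with generator matrix G (columns form an F_q-basis of U), and let C be the F_{q^m}-linear code with generator matrix G. Then U is rank-ρ-saturating if and only if the rank-metric covering radius of the dual code C^⊥ equals ρ. -/
open Matrix

/-- The rank weight of a vector. -/
noncomputable def rkWt (K : Type*) {L : Type*} [Field K] [Field L] [Algebra K L]
    {n : ℕ} (v : Fin n → L) : ℕ :=
  Module.finrank K (Submodule.span K (Set.range v))

/-- The rank-metric covering radius of a code `C ⊆ F_{q^m}^n`. -/
noncomputable def rkCovRad (K : Type*) {L : Type*} [Field K] [Field L] [Algebra K L]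
    {n : ℕ} (C : Set (Fin n → L)) : ℕ :=
  sInf {r : ℕ | ∀ x : Fin n → L, ∃ c ∈ C, rkWt K (x - c) ≤ r}

/-!
`C^⊥` is the kernel of `λ ↦ Gλ`, which is onto because `U` spans `F_{q^m}^k`. So `x` lies
within rank distance `r` of `C^⊥` iff the syndrome `Gx` has a preimage of rank weight `≤ r`
(namely `x - c` with `c ∈ C^⊥`): saturation and covering at level `r` coincide, hence so do
their least levels.
-/

theorem Matrix.mulVec_eq_zero_iff_forall_vecMul_dotProduct {R : Type*} [CommSemiring R]
    {k n : Type*} [Fintype k] [Fintype n] (G : Matrix k n R) (v : n → R) :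
    G *ᵥ v = 0 ↔ ∀ x : k → R, x ᵥ* G ⬝ᵥ v = 0 := by
  simp only [← dotProduct_mulVec, dotProduct_comm _ (G *ᵥ v), dotProduct_eq_zero_iff]

theorem forall_exists_wt_le_preimage_iff {F M N : Type*} [AddCommGroup M] [AddGroup N]
    [FunLike F M N] [AddMonoidHomClass F M N] (f : F) (hf : Function.Surjective f)
    (wt : M → ℕ) (r : ℕ) :
    (∀ v, ∃ lam, wt lam ≤ r ∧ v = f lam) ↔ ∀ x, ∃ c, f c = 0 ∧ wt (x - c) ≤ r := by
  constructor
  · intro h x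
    obtain ⟨lam, hlam, hx⟩ := h (f x)
    exact ⟨x - lam, by rw [map_sub, hx, sub_self], by rwa [sub_sub_self]⟩
  · intro h v
    obtain ⟨x, rfl⟩ := hf v
    obtain ⟨c, hc, hwt⟩ := h x
    exact ⟨x - c, hwt, by rw [map_sub, hc, sub_zero]⟩

theorem rkWt_le (K : Type*) {L : Type*} [Field K] [Field L] [Algebra K L] {n : ℕ}
    (v : Fin n → L) : rkWt K v ≤ n := by
  simpa [rkWt, Set.finrank] using finrank_range_le_card (R := K) v

theorem Nat.sInf_setOf_eq_iff {p : ℕ → Prop} (hp : ∃ r, p r) {ρ : ℕ} :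
    sInf {r | p r} = ρ ↔ p ρ ∧ ∀ r < ρ, ¬ p r := by
  classical
  rw [Nat.sInf_def (s := {r | p r}) hp]
  exact Nat.find_eq_iff hp

theorem rankSat_iff_covRad_dual_general (K L : Type*) [Field K] [Field L] [Algebra K L]
    {k n ρ : ℕ}
    (G : Matrix (Fin k) (Fin n) L)
    (U : Submodule K (Fin k → L))
    (hU : Submodule.span K (Set.range fun j : Fin n => Gᵀ j) = U)
    (hnondeg : Submodule.span L (U : Set (Fin k → L)) = ⊤) :
    ((∀ v : Fin k → L, ∃ lam : Fin n → L, rkWt K lam ≤ ρ ∧ v = G.mulVec lam) ∧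
        ∀ r < ρ, ¬ (∀ v : Fin k → L, ∃ lam : Fin n → L,
          rkWt K lam ≤ r ∧ v = G.mulVec lam))
      ↔ rkCovRad K {v : Fin n → L |
          ∀ c ∈ {c : Fin n → L | ∃ x : Fin k → L, c = Matrix.vecMul x G},
            ∑ j, v j * c j = 0} = ρ := by
  have hsurj : Function.Surjective G.mulVecLin := by
    rw [← LinearMap.range_eq_top, range_mulVecLin, ← Submodule.span_span_of_tower K, ← hnondeg,
      ← hU]
    rfl
  have hdual : {v : Fin n → L |
      ∀ c ∈ {c : Fin n → L | ∃ x : Fin k → L, c = Matrix.vecMul x G}, ∑ j, v j * c j = 0} =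
      {v | G *ᵥ v = 0} := by
    ext v
    simp [G.mulVec_eq_zero_iff_forall_vecMul_dotProduct, dotProduct, mul_comm]
  have hsat (r : ℕ) := forall_exists_wt_le_preimage_iff G.mulVecLin hsurj (rkWt K) r
  simp only [mulVecLin_apply] at hsat
  rw [rkCovRad, hdual]
  simp only [Set.mem_ofPred_eq, ← hsat]
  refine (Nat.sInf_setOf_eq_iff
    (p := fun r => ∀ v : Fin k → L, ∃ lam, rkWt K lam ≤ r ∧ v = G *ᵥ lam) ?_).symm
  exact ⟨n, fun v => (hsurj v).imp fun lam h => ⟨rkWt_le K lam, h.symm⟩⟩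

/-- Let `U` be an `[n,k]_{q^m/q}` system with generator matrix `G` (the columns of `G`
form an `F_q`-basis of `U`), and let `C` be the `F_{q^m}`-linear code with generator
matrix `G`. Then `U` is rank-`ρ`-saturating (every `v ∈ F_{q^m}^k` equals `Gλ` for some
`λ` of rank weight `≤ ρ`, with `ρ` minimal) if and only if the rank-metric covering
radius of the dual code `C^⊥` equals `ρ`. -/
theorem rankSat_iff_covRad_dual (K L : Type*) [Field K] [Field L] [Algebra K L]
    [Fintype K] [Fintype L] {k n ρ : ℕ}
    (G : Matrix (Fin k) (Fin n) L)
    (U : Submodule K (Fin k → L))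
    (hcols : LinearIndependent K (fun j : Fin n => Gᵀ j))
    (hU : Submodule.span K (Set.range fun j : Fin n => Gᵀ j) = U)
    (hnondeg : Submodule.span L (U : Set (Fin k → L)) = ⊤) :
    ((∀ v : Fin k → L, ∃ lam : Fin n → L, rkWt K lam ≤ ρ ∧ v = G.mulVec lam) ∧
        ∀ r < ρ, ¬ (∀ v : Fin k → L, ∃ lam : Fin n → L,
          rkWt K lam ≤ r ∧ v = G.mulVec lam))
      ↔ rkCovRad K {v : Fin n → L |
          ∀ c ∈ {c : Fin n → L | ∃ x : Fin k → L, c = Matrix.vecMul x G},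
            ∑ j, v j * c j = 0} = ρ :=
  rankSat_iff_covRad_dual_general K L G U hU hnondeg
end

section
/- If U is a rank-ρ-saturating [n,k]_{q^m/q} system, then the Gaussian binomial coefficient [n choose ρ]_q multiplied by q^{mρ} is at least q^{mk}; equivalently, [n choose ρ]_q ≥ q^{m(k-ρ)}. -/
/-- `U` covers with radius `r`: every vector of `F_{q^m}^k` lies in the `F_{q^m}`-span
of an `F_q`-subspace of `U` of `F_q`-dimension at most `r`. -/
def RkCovers (K : Type*) {L : Type*} [Field K] [Field L] [Algebra K L]
    {ι : Type*} (U : Submodule K (ι → L)) (r : ℕ) : Prop :=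
  ∀ v : ι → L, ∃ S : Submodule K (ι → L), S ≤ U ∧ Module.finrank K S ≤ r ∧
    v ∈ Submodule.span L (S : Set (ι → L))

/-- `U` is rank-`ρ`-saturating: it covers with radius `ρ` and `ρ` is minimal. -/
def IsRankSat (K : Type*) {L : Type*} [Field K] [Field L] [Algebra K L]
    {ι : Type*} (U : Submodule K (ι → L)) (ρ : ℕ) : Prop :=
  RkCovers K U ρ ∧ ∀ r < ρ, ¬ RkCovers K U r

/-- `s_{q^m/q}(k, ρ)`: the minimal `F_q`-dimension of a rank-`ρ`-saturating
`[n,k]_{q^m/q}` system in `F_{q^m}^k`. -/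
noncomputable def sMin (K L : Type*) [Field K] [Field L] [Algebra K L] (k ρ : ℕ) : ℕ :=
  sInf {n : ℕ | ∃ U : Submodule K (Fin k → L),
    Module.finrank K U = n ∧ Submodule.span L (U : Set (Fin k → L)) = ⊤ ∧
      IsRankSat K U ρ}

/-! Every vector of `F_{q^m}^k` lies in the `F_{q^m}`-span of an `F_q`-subspace of `U` of dimension
at most `ρ`, which can be enlarged inside `U` to dimension exactly `ρ` because minimality of `ρ`
forces `ρ ≤ n`. Such a span is spanned over `F_{q^m}` by a `ρ`-element `F_q`-basis, so it has at
most `q^{mρ}` elements, and `U ≅ F_q^n` has `[n choose ρ]_q` subspaces of dimension `ρ`: the union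
bound over them gives the inequality. -/

open Module Submodule

theorem Submodule.exists_le_finrank_eq {K V : Type*} [Field K] [AddCommGroup V] [Module K V]
    [FiniteDimensional K V] (S : Submodule K V) {d : ℕ} (hS : finrank K S ≤ d)
    (hd : d ≤ finrank K V) : ∃ T : Submodule K V, S ≤ T ∧ finrank K T = d := by
  obtain ⟨j, rfl⟩ := Nat.exists_eq_add_of_le hS
  clear hS
  induction j generalizing S with
  | zero => exact ⟨S, le_rfl, rfl⟩
  | succ j ih =>
    have hS_top : S ≠ ⊤ := by
      rintro rfl
      rw [finrank_top] at hd
      omega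
    obtain ⟨x, -, hx⟩ := SetLike.exists_of_lt hS_top.lt_top
    have hrank := finrank_sup_span_singleton hx
    obtain ⟨T, hST, hT⟩ := ih (S ⊔ K ∙ x) (by omega)
    exact ⟨T, le_sup_left.trans hST, by omega⟩

theorem Submodule.natCard_span_le_pow_finrank {K L V : Type*} [Field K] [Field L] [Algebra K L]
    [AddCommGroup V] [Module K V] [Module L V] [IsScalarTower K L V] [Finite L]
    (S : Submodule K V) [FiniteDimensional K S] :
    Nat.card (span L (S : Set V)) ≤ Nat.card L ^ finrank K S := by
  obtain ⟨f, hf⟩ : ∃ f : Fin (finrank K S) → V, span K (Set.range f) = S := by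
    let b := finBasis K S
    exact ⟨S.subtype ∘ b, by rw [Set.range_comp, span_image, b.span_eq, map_top, range_subtype]⟩
  have hspan : span L (S : Set V) = span L (Set.range f) := by
    rw [← span_span_of_tower K L (Set.range f), hf]
  have : Module.Finite L (span L (S : Set V)) :=
    hspan ▸ Module.Finite.span_of_finite L (Set.finite_range f)
  rw [natCard_eq_pow_finrank (K := L)]
  refine Nat.pow_le_pow_right Nat.card_pos ?_
  rw [hspan]
  simpa [Set.finrank] using finrank_range_le_card (R := L) f

theorem Nat.card_le_card_mul_of_iUnion_eq_univ {α ι : Type*} [Finite ι] {s : ι → Set α}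
    (hs : ⋃ i, s i = Set.univ) {N : ℕ} (hN : ∀ i, (s i).ncard ≤ N) :
    Nat.card α ≤ Nat.card ι * N := by
  have := Fintype.ofFinite ι
  calc Nat.card α = (⋃ i, s i).ncard := by rw [hs, Set.ncard_univ]
    _ ≤ ∑ i, (s i).ncard := Set.ncard_iUnion_le_of_fintype s
    _ ≤ ∑ _i : ι, N := Finset.sum_le_sum fun i _ => hN i
    _ = Nat.card ι * N := by simp [Nat.card_eq_fintype_card]

theorem LinearEquiv.natCard_submodule_finrank_eq {K V W : Type*} [Field K] [AddCommGroup V]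
    [Module K V] [AddCommGroup W] [Module K W] (e : V ≃ₗ[K] W) (r : ℕ) :
    Nat.card {S : Submodule K V // finrank K S = r} =
      Nat.card {S : Submodule K W // finrank K S = r} :=
  Nat.card_congr <| (orderIsoMapComap e).toEquiv.subtypeEquiv fun S => by
    rw [← e.finrank_map_eq S]
    rfl

section RankCovering

variable {K L ι : Type*} [Field K] [Field L] [Algebra K L] {U : Submodule K (ι → L)}

theorem rkCovers_finrank_of_span_eq_top (hspan : span L (U : Set (ι → L)) = ⊤) :
    RkCovers K U (finrank K U) :=
  fun _ => ⟨U, le_rfl, le_rfl, hspan ▸ mem_top⟩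

theorem IsRankSat.le_finrank {ρ : ℕ} (hsat : IsRankSat K U ρ)
    (hspan : span L (U : Set (ι → L)) = ⊤) : ρ ≤ finrank K U :=
  not_lt.1 fun h => hsat.2 _ h (rkCovers_finrank_of_span_eq_top hspan)

theorem RkCovers.exists_finrank_eq [FiniteDimensional K U] {r : ℕ} (h : RkCovers K U r)
    (hr : r ≤ finrank K U) (v : ι → L) :
    ∃ T : Submodule K U, finrank K T = r ∧ v ∈ span L (T.map U.subtype : Set (ι → L)) := by
  obtain ⟨S, hSU, hSr, hv⟩ := h v
  have hmap : (S.comap U.subtype).map U.subtype = S := by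
    rw [map_comap_subtype, inf_eq_right.2 hSU]
  obtain ⟨T, hST, hT⟩ := (S.comap U.subtype).exists_le_finrank_eq
    (by rwa [← finrank_map_subtype_eq, hmap]) hr
  exact ⟨T, hT, span_mono (hmap ▸ map_mono hST) hv⟩

end RankCovering

/-- Counting bound: if `U` is a rank-`ρ`-saturating `[n,k]_{q^m/q}` system, then
`[n choose ρ]_q · q^{mρ} ≥ q^{mk}`, where `[n choose ρ]_q` is the number of
`ρ`-dimensional `F_q`-subspaces of an `n`-dimensional `F_q`-space. -/
theorem counting_bound (K L : Type*) [Field K] [Field L] [Algebra K L]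
    [Fintype K] [Fintype L] {k n ρ : ℕ}
    (U : Submodule K (Fin k → L))
    (hdim : Module.finrank K U = n)
    (hspan : Submodule.span L (U : Set (Fin k → L)) = ⊤)
    (hsat : IsRankSat K U ρ) :
    (Fintype.card K) ^ (Module.finrank K L * k) ≤
      Nat.card {S : Submodule K (Fin n → K) // Module.finrank K S = ρ} *
        (Fintype.card K) ^ (Module.finrank K L * ρ) := by
  have hcover : ⋃ T : {T : Submodule K U // finrank K T = ρ},
      (span L (T.1.map U.subtype : Set (Fin k → L)) : Set (Fin k → L)) = Set.univ :=
    Set.eq_univ_of_forall fun v => by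
      obtain ⟨T, hT, hv⟩ := hsat.1.exists_finrank_eq (hsat.le_finrank hspan) v
      exact Set.mem_iUnion.2 ⟨⟨T, hT⟩, hv⟩
  have hcard := Nat.card_le_card_mul_of_iUnion_eq_univ hcover fun T => by
    have := (T.1.map U.subtype).natCard_span_le_pow_finrank (L := L)
    rwa [finrank_map_subtype_eq, T.2] at this
  rw [(finBasisOfFinrankEq K U hdim).equivFun.natCard_submodule_finrank_eq] at hcard
  have hL : Fintype.card L = Fintype.card K ^ finrank K L := card_eq_pow_finrank
  simpa [pow_mul, ← hL, Nat.card_eq_fintype_card] using hcard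
end

section
/- If U is a rank-ρ-saturating [n,k]_{q^m/q} system with q > 2, then n ≥ ⌈mk/ρ⌉ - m + ρ. -/
/-!
Every vector of `F_{q^m}^k` lies in the `F_{q^m}`-span of one of the `[n choose ρ]_q` subspaces
of `U` of dimension exactly `ρ` (a covering subspace can be enlarged inside `U`), and each such
span has at most `q^{mρ}` elements; hence `q^{mk} ≤ [n choose ρ]_q · q^{mρ}`. Counting ordered
bases gives `[n choose ρ]_q · |GL_ρ(F_q)| ≤ q^{nρ}`, and for `q ≥ 3` one has
`2 |GL_ρ(F_q)| > q^{ρ²}`. Together `q^{mk + ρ²} < 2 q^{nρ + mρ} ≤ q^{nρ + mρ + 1}`, that is,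
`mk ≤ ρ (n + m - ρ)`.
-/

open Module Submodule Finset

section Extension
variable {K V : Type*} [Field K] [AddCommGroup V] [Module K V] [FiniteDimensional K V]

theorem Submodule.exists_le_le_finrank_eq {W U : Submodule K V} {r : ℕ} (hWU : W ≤ U)
    (hWr : finrank K W ≤ r) (hrU : r ≤ finrank K U) :
    ∃ W' : Submodule K V, W ≤ W' ∧ W' ≤ U ∧ finrank K W' = r := by
  induction r, hWr using Nat.le_induction with
  | base => exact ⟨W, le_rfl, hWU, rfl⟩
  | succ r _ ih =>
    obtain ⟨W', hWW', hW'U, hW'r⟩ := ih (by omega)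
    have hlt : W' < U := lt_of_le_of_ne hW'U fun h => by rw [h] at hW'r; omega
    obtain ⟨x, hxU, hxW'⟩ := SetLike.exists_of_lt hlt
    refine ⟨W' ⊔ K ∙ x, hWW'.trans le_sup_left, sup_le hW'U ?_, ?_⟩
    · rwa [span_singleton_le_iff_mem]
    · rw [finrank_sup_span_singleton hxW', hW'r]

end Extension

section Covering
variable {K L M : Type*} [Field K] [Field L] [Algebra K L] [AddCommGroup M] [Module K M]
  [Module L M] [IsScalarTower K L M]

theorem Submodule.natCard_span_le [Finite L] (S : Submodule K M) [Module.Finite K S] :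
    Nat.card (span L (S : Set M)) ≤ Nat.card L ^ finrank K S := by
  let f : Fin (finrank K S) → M := S.subtype ∘ Module.finBasis K S
  have hspan : span L (S : Set M) = span L (Set.range f) := by
    rw [← span_span_of_tower K L (Set.range f), Set.range_comp, ← map_span, Basis.span_eq,
      Submodule.map_top, range_subtype]
  have hsurj : Function.Surjective fun c : Fin (finrank K S) → L =>
      (⟨∑ i, c i • f i, hspan ▸ (mem_span_range_iff_exists_fun L).2 ⟨c, rfl⟩⟩ :
        span L (S : Set M)) := by
    rintro ⟨v, hv⟩
    obtain ⟨c, rfl⟩ := (mem_span_range_iff_exists_fun L).1 (hspan ▸ hv)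
    exact ⟨c, rfl⟩
  simpa [Nat.card_fun] using Nat.card_le_card_of_surjective _ hsurj

theorem natCard_le_card_mul_pow_of_forall_mem_span [Finite L] [Finite M] {ι : Type*} [Finite ι]
    (S : ι → Submodule K M) {r : ℕ} (hS : ∀ i, finrank K (S i) = r)
    (hcover : ∀ v : M, ∃ i, v ∈ span L (S i : Set M)) :
    Nat.card M ≤ Nat.card ι * Nat.card L ^ r := by
  have : Fintype ι := Fintype.ofFinite ι
  have hsurj : Function.Surjective fun x : Σ i, span L (S i : Set M) => (x.2 : M) := fun v =>
    let ⟨i, hi⟩ := hcover v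
    ⟨⟨i, v, hi⟩, rfl⟩
  calc Nat.card M ≤ Nat.card (Σ i, span L (S i : Set M)) := Nat.card_le_card_of_surjective _ hsurj
    _ = ∑ i, Nat.card (span L (S i : Set M)) := Nat.card_sigma
    _ ≤ ∑ _i : ι, Nat.card L ^ r := sum_le_sum fun i _ => hS i ▸ (S i).natCard_span_le
    _ = Nat.card ι * Nat.card L ^ r := by simp

end Covering

section SubspaceCount
variable {K V : Type*} [Field K] [AddCommGroup V] [Module K V] {r : ℕ}

theorem LinearIndependent.span_range_subtype_comp {W : Submodule K V} [Module.Finite K W]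
    (hW : finrank K W = r) {g : Fin r → W} (hg : LinearIndependent K g) :
    span K (Set.range (W.subtype ∘ g)) = W := by
  rw [Set.range_comp, ← map_span, hg.span_eq_top_of_card_eq_finrank' (by simp [hW]),
    Submodule.map_top, range_subtype]

variable (K V r) in
def spanOfLinearIndependent :
    {f : Fin r → V // LinearIndependent K f} → {W : Submodule K V // finrank K W = r} :=
  fun f => ⟨span K (Set.range f.1), by rw [finrank_span_eq_card f.2, Fintype.card_fin]⟩

def fiberSpanOfLinearIndependentEquiv [Module.Finite K V]
    (W : {W : Submodule K V // finrank K W = r}) :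
    {f // spanOfLinearIndependent K V r f = W} ≃ {g : Fin r → W.1 // LinearIndependent K g} where
  toFun f := ⟨fun i => ⟨f.1.1 i, congrArg Subtype.val f.2 ▸ subset_span ⟨i, rfl⟩⟩,
    .of_comp W.1.subtype f.1.2⟩
  invFun g := ⟨⟨W.1.subtype ∘ g.1, g.2.map' _ W.1.ker_subtype⟩,
    Subtype.ext (g.2.span_range_subtype_comp W.2)⟩
  left_inv _ := rfl
  right_inv _ := rfl

theorem natCard_finrank_eq_mul_prod [Fintype K] [Finite V] (hr : r ≤ finrank K V) :
    Nat.card {W : Submodule K V // finrank K W = r} *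
        ∏ i : Fin r, (Fintype.card K ^ r - Fintype.card K ^ (i : ℕ)) =
      ∏ i : Fin r, (Fintype.card K ^ finrank K V - Fintype.card K ^ (i : ℕ)) := by
  have : Fintype {W : Submodule K V // finrank K W = r} := Fintype.ofFinite _
  rw [← card_linearIndependent hr,
    ← Nat.card_congr (Equiv.sigmaFiberEquiv (spanOfLinearIndependent K V r)), Nat.card_sigma]
  simp_rw [Nat.card_congr (fiberSpanOfLinearIndependentEquiv _)]
  rw [sum_congr rfl fun W _ => by rw [card_linearIndependent W.2.ge, W.2], sum_const, card_univ,
    smul_eq_mul, Nat.card_eq_fintype_card]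

end SubspaceCount

theorem prod_range_pow_sub_pow_succ (q r : ℕ) :
    ∏ i ∈ range (r + 1), (q ^ (r + 1) - q ^ i) =
      (q ^ (r + 1) - 1) * q ^ r * ∏ i ∈ range r, (q ^ r - q ^ i) := by
  have hfactor : ∀ i ∈ range r, q ^ (r + 1) - q ^ (i + 1) = q * (q ^ r - q ^ i) := by
    intro i _
    rw [Nat.mul_sub, pow_succ', pow_succ']
  rw [prod_range_succ', prod_congr rfl hfactor, prod_mul_distrib, prod_const, card_range,
    pow_zero]
  ring

/- The strengthening of `q ^ (r * r) < 2 * ∏ i < r, (q ^ r - q ^ i)` that survives induction; it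
says `∏ j ∈ [1, r], (1 - q⁻ʲ) ≥ (1 + q⁻ʳ) / 2`. -/
theorem pow_mul_self_mul_pow_add_one_le {q : ℕ} (hq : 2 < q) (r : ℕ) :
    q ^ (r * r) * (q ^ r + 1) ≤ 2 * (∏ i ∈ range r, (q ^ r - q ^ i)) * q ^ r := by
  induction r with
  | zero => simp
  | succ r ih =>
    set a := q ^ r with ha
    have ha1 : 1 ≤ a := Nat.one_le_pow _ _ (by omega)
    -- after cancelling, the inductive step is this inequality, i.e. `2a + 1 ≤ a q`
    have hstep : a * (a * q + 1) ≤ (a * q - 1) * (a + 1) := by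
      have : 1 ≤ a * q := by nlinarith
      zify [this]
      nlinarith
    rw [prod_range_pow_sub_pow_succ, ← ha]
    calc q ^ ((r + 1) * (r + 1)) * (q ^ (r + 1) + 1)
        = q ^ (r * r) * a * q * (a * (a * q + 1)) := by rw [ha]; ring
      _ ≤ q ^ (r * r) * a * q * ((a * q - 1) * (a + 1)) := by gcongr
      _ = (q ^ (r * r) * (a + 1)) * ((a * q - 1) * q * a) := by ring
      _ ≤ (2 * (∏ i ∈ range r, (a - q ^ i)) * a) * ((a * q - 1) * q * a) := by gcongr
      _ = 2 * ((q ^ (r + 1) - 1) * a * ∏ i ∈ range r, (a - q ^ i)) * q ^ (r + 1) := by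
        rw [pow_succ, ← ha]; ring

theorem pow_mul_self_lt_two_mul_prod {q : ℕ} (hq : 2 < q) (r : ℕ) :
    q ^ (r * r) < 2 * ∏ i : Fin r, (q ^ r - q ^ (i : ℕ)) := by
  rw [Fin.prod_univ_eq_prod_range (fun i => q ^ r - q ^ i)]
  refine Nat.lt_of_mul_lt_mul_right (a := q ^ r) ?_
  calc q ^ (r * r) * q ^ r < q ^ (r * r) * (q ^ r + 1) := by gcongr; omega
    _ ≤ _ := pow_mul_self_mul_pow_add_one_le hq r

theorem add_le_add_of_pow_le_mul_pow {q N c a b d e : ℕ} (hq : 2 < q)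
    (h₁ : q ^ a ≤ N * q ^ b) (h₂ : N * c ≤ q ^ d) (h₃ : q ^ e < 2 * c) : a + e ≤ d + b := by
  have hlt : q ^ (a + e) < q ^ (d + b + 1) :=
    calc q ^ (a + e) = q ^ a * q ^ e := pow_add q a e
      _ ≤ N * q ^ b * q ^ e := by gcongr
      _ ≤ N * q ^ b * (2 * c) := by gcongr
      _ = 2 * (N * c) * q ^ b := by ring
      _ ≤ 2 * q ^ d * q ^ b := by gcongr
      _ < q * q ^ d * q ^ b := by gcongr
      _ = q ^ (d + b + 1) := by ring
  have := (Nat.pow_lt_pow_iff_right (by omega)).1 hlt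
  omega

section RankCovering
variable {K L ι : Type*} [Field K] [Field L] [Algebra K L] {U : Submodule K (ι → L)} {r ρ : ℕ}

theorem RkCovers.rkCovers_finrank (h : RkCovers K U r) : RkCovers K U (finrank K U) := fun v =>
  let ⟨_, hSU, _, hv⟩ := h v
  ⟨U, le_rfl, le_rfl, span_mono hSU hv⟩

theorem IsRankSat.le_finrank_s10 (h : IsRankSat K U ρ) : ρ ≤ finrank K U :=
  not_lt.1 fun hlt => h.2 _ hlt h.1.rkCovers_finrank

theorem RkCovers.natCard_le [Finite ι] [Finite L] (h : RkCovers K U r) (hr : r ≤ finrank K U) :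
    Nat.card (ι → L) ≤ Nat.card {W : Submodule K U // finrank K W = r} * Nat.card L ^ r := by
  refine natCard_le_card_mul_pow_of_forall_mem_span (fun W => W.1.map U.subtype)
    (fun W => (finrank_map_subtype_eq U W.1).trans W.2) fun v => ?_
  obtain ⟨S, hSU, hSr, hv⟩ := h v
  obtain ⟨S', hSS', hS'U, hS'r⟩ := exists_le_le_finrank_eq hSU hSr hr
  have hS' : (S'.comap U.subtype).map U.subtype = S' := by
    rw [map_comap_subtype, inf_eq_right.2 hS'U]
  refine ⟨⟨S'.comap U.subtype, (comapSubtypeEquivOfLe hS'U).finrank_eq.trans hS'r⟩, ?_⟩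
  rw [hS']
  exact span_mono hSS' hv

end RankCovering

theorem lower_bound_q_gt_two_general (K L : Type*) [Field K] [Field L] [Algebra K L]
    [Fintype K] [Fintype L] {k n ρ : ℕ}
    (hq : 2 < Fintype.card K)
    (U : Submodule K (Fin k → L))
    (hdim : Module.finrank K U = n)
    (hsat : IsRankSat K U ρ) :
    (⌈((Module.finrank K L * k : ℕ) : ℚ) / (ρ : ℚ)⌉ - (Module.finrank K L : ℤ) + ρ)
      ≤ (n : ℤ) := by
  set q := Fintype.card K
  set m := finrank K L
  have hρn : ρ ≤ finrank K U := hsat.le_finrank_s10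
  have hcover : q ^ (m * k) ≤ Nat.card {W : Submodule K U // finrank K W = ρ} * q ^ (m * ρ) := by
    simpa [Nat.card_fun, card_eq_pow_finrank (K := K) (V := L), ← pow_mul, mul_comm]
      using hsat.1.natCard_le hρn
  have hcount : Nat.card {W : Submodule K U // finrank K W = ρ} *
      ∏ i : Fin ρ, (q ^ ρ - q ^ (i : ℕ)) ≤ q ^ (n * ρ) := by
    rw [natCard_finrank_eq_mul_prod hρn, hdim, pow_mul]
    simpa using prod_le_pow_card univ (fun i : Fin ρ => q ^ n - q ^ (i : ℕ)) (q ^ n)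
      fun i _ => Nat.sub_le _ _
  have key : m * k + ρ * ρ ≤ n * ρ + m * ρ :=
    add_le_add_of_pow_le_mul_pow hq hcover hcount (pow_mul_self_lt_two_mul_prod hq ρ)
  have hceil : ⌈((m * k : ℕ) : ℚ) / ρ⌉ ≤ (n + m - ρ : ℤ) := by
    refine Int.ceil_le.2 (div_le_of_le_mul₀ (by positivity) ?_ ?_) <;> push_cast
    · linarith [(Nat.cast_le (α := ℚ)).2 (hdim ▸ hρn)]
    · exact_mod_cast (by push_cast; linarith [(Nat.cast_le (α := ℤ)).2 key] :
        ((m * k : ℕ) : ℤ) ≤ ((n : ℤ) + m - ρ) * ρ)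
  linarith

/-- Lower bound for `q > 2`: if `U` is a rank-`ρ`-saturating `[n,k]_{q^m/q}` system
with `q > 2`, then `n ≥ ⌈mk/ρ⌉ - m + ρ`. -/
theorem lower_bound_q_gt_two (K L : Type*) [Field K] [Field L] [Algebra K L]
    [Fintype K] [Fintype L] {k n ρ : ℕ}
    (hq : 2 < Fintype.card K) (hρ : 1 ≤ ρ)
    (U : Submodule K (Fin k → L))
    (hdim : Module.finrank K U = n)
    (hspan : Submodule.span L (U : Set (Fin k → L)) = ⊤)
    (hsat : IsRankSat K U ρ) :
    (⌈((Module.finrank K L * k : ℕ) : ℚ) / (ρ : ℚ)⌉ - (Module.finrank K L : ℤ) + ρ)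
      ≤ (n : ℤ) :=
  lower_bound_q_gt_two_general K L hq U hdim hsat
end

section
/- For all m, k ≥ 2 and any prime power q, there exists a rank-1-saturating [m(k-1)+1, k]_{q^m/q} system; consequently s_{q^m/q}(k,1) = m(k-1)+1, where s_{q^m/q}(k,ρ) denotes the minimal F_q-dimension of a rank-ρ-saturating system in F_{q^m}^k. -/
section Aux

open Module Submodule

variable {K L : Type*} [Field K] [Field L] [Algebra K L] {k : ℕ}

/-- From a radius-1 cover, every vector is an `L`-multiple of a vector of `U`. -/
lemma covers_one_line [Finite K] [Finite L] (U : Submodule K (Fin k → L))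
    (h : RkCovers K U 1) (v : Fin k → L) :
    ∃ u ∈ U, ∃ l : L, v = l • u := by
  obtain ⟨S, hSU, hS1, hv⟩ := h v
  haveI : Module.Finite K (Fin k → L) := Module.Finite.of_finite
  have hP : S.IsPrincipal := (S.finrank_le_one_iff_isPrincipal).1 hS1
  obtain ⟨u, hu⟩ := hP.principal
  refine ⟨u, hSU (hu ▸ Submodule.mem_span_singleton_self u), ?_⟩
  have hle : Submodule.span L (S : Set (Fin k → L)) ≤ Submodule.span L {u} := by
    rw [Submodule.span_le]
    intro x hx
    rw [hu] at hx
    obtain ⟨c, rfl⟩ := Submodule.mem_span_singleton.1 hx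
    rw [← algebraMap_smul L c u]
    exact Submodule.smul_mem _ _ (Submodule.subset_span rfl)
  obtain ⟨l, hl⟩ := Submodule.mem_span_singleton.1 (hle hv)
  exact ⟨l, hl.symm⟩


/-- Counting lower bound: a spanning radius-1 covering system has
`F_q`-dimension at least `m(k-1)+1`. -/
lemma lower_bound_aux [Fintype K] [Fintype L] {k : ℕ}
    (hm : 2 ≤ finrank K L) (hk : 2 ≤ k)
    (U : Submodule K (Fin k → L))
    (hcov : RkCovers K U 1) :
    finrank K L * (k - 1) + 1 ≤ finrank K U := by
  classical
  haveI : Module.Finite K (Fin k → L) := Module.Finite.of_finite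
  have halg : Function.Injective (algebraMap K L) := (algebraMap K L).injective
  -- choice of a line through each nonzero vector
  have hc : ∀ v : {v : Fin k → L // v ≠ 0}, ∃ p : U × L,
      (v : Fin k → L) = p.2 • (p.1 : Fin k → L) := by
    rintro ⟨v, hv⟩
    obtain ⟨u, hu, l, hl⟩ := covers_one_line U hcov v
    exact ⟨(⟨u, hu⟩, l), hl⟩
  choose f hf using hc
  have hl_ne : ∀ v, (f v).2 ≠ 0 := by
    intro v hv0
    apply v.2
    rw [hf v, hv0, zero_smul]
  have hu_ne : ∀ v, ((f v).1 : Fin k → L) ≠ 0 := by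
    intro v hv0
    apply v.2
    rw [hf v, hv0, smul_zero]
  -- the injection
  set G : Kˣ × {v : Fin k → L // v ≠ 0} → U × Lˣ := fun x =>
    (⟨(x.1 : K) • ((f x.2).1 : Fin k → L), U.smul_mem _ (f x.2).1.2⟩,
      (Units.mk0 (algebraMap K L (x.1 : K))
        (by simpa using (map_ne_zero_iff _ halg).2 x.1.ne_zero))⁻¹ *
        Units.mk0 (f x.2).2 (hl_ne x.2)) with hG
  have hGrec : ∀ x : Kˣ × {v : Fin k → L // v ≠ 0},
      ((((G x).2 : Lˣ) : L)) • (((G x).1 : U) : Fin k → L) = (x.2 : Fin k → L) := by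
    rintro ⟨c, v⟩
    have hc0 : algebraMap K L (c : K) ≠ 0 := by
      simpa using (map_ne_zero_iff _ halg).2 c.ne_zero
    show ((algebraMap K L (c : K))⁻¹ * (f v).2) • ((c : K) • ((f v).1 : Fin k → L)) = _
    rw [← algebraMap_smul L (c : K) ((f v).1 : Fin k → L), smul_smul,
      mul_comm (algebraMap K L (c : K))⁻¹ ((f v).2), mul_assoc,
      inv_mul_cancel₀ hc0, mul_one, ← hf v]
  have hGinj : Function.Injective G := by
    rintro ⟨c, v⟩ ⟨c', v'⟩ h
    have h1 := congrArg Prod.fst h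
    have h2 := congrArg Prod.snd h
    have hv : v = v' := by
      have := hGrec (c, v)
      rw [h] at this
      have h' := (hGrec (c', v')).symm.trans this
      exact Subtype.ext h'.symm
    subst hv
    have h1' : (c : K) • ((f v).1 : Fin k → L) = (c' : K) • ((f v).1 : Fin k → L) :=
      congrArg Subtype.val h1
    obtain ⟨i, hi⟩ : ∃ i, ((f v).1 : Fin k → L) i ≠ 0 := by
      by_contra hno
      push_neg at hno
      exact hu_ne v (funext hno)
    have : algebraMap K L (c : K) * ((f v).1 : Fin k → L) i
        = algebraMap K L (c' : K) * ((f v).1 : Fin k → L) i := by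
      have := congrFun h1' i
      simpa [Pi.smul_apply, Algebra.smul_def] using this
    have hcc : (c : K) = (c' : K) := halg (mul_right_cancel₀ hi this)
    simp [Units.ext_iff, hcc]
  -- cardinalities
  have key := Fintype.card_le_of_injective G hGinj
  rw [Fintype.card_prod, Fintype.card_prod, Fintype.card_units, Fintype.card_units] at key
  have hcardsub : Fintype.card {v : Fin k → L // v ≠ 0}
      = Fintype.card (Fin k → L) - 1 := by
    rw [Fintype.card_subtype_compl (fun v => v = (0 : Fin k → L))]
    simp
  rw [hcardsub] at key
  set q := Fintype.card K with hq
  set m := finrank K L with hmdef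
  have hq2 : 2 ≤ q := Fintype.one_lt_card
  have hQ : Fintype.card L = q ^ m := card_eq_pow_finrank
  have hN : Fintype.card (Fin k → L) = (q ^ m) ^ k := by
    rw [Fintype.card_fun, hQ, Fintype.card_fin]
  have hU : Fintype.card U = q ^ (finrank K U) := card_eq_pow_finrank
  rw [hN, hQ, hU] at key
  -- now pure arithmetic
  by_contra hlt
  push_neg at hlt
  have hn : finrank K U ≤ m * (k - 1) := by omega
  have hqpos : 1 ≤ q := by omega
  have hu_le : q ^ finrank K U ≤ (q ^ m) ^ (k - 1) := by
    rw [← pow_mul]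
    exact Nat.pow_le_pow_right hqpos hn
  set Q := q ^ m with hQdef
  have hQ4 : 4 ≤ Q := by
    calc (4 : ℕ) = 2 ^ 2 := by norm_num
    _ ≤ q ^ m := Nat.pow_le_pow_left hq2 2 |>.trans (Nat.pow_le_pow_right (by omega) hm)
  set B := Q ^ (k - 1) with hBdef
  have hBQ : B * Q = Q ^ k := by
    rw [hBdef, ← pow_succ]
    congr 1
    omega
  have hQB : Q ≤ B := by
    calc Q = Q ^ 1 := (pow_one Q).symm
    _ ≤ Q ^ (k - 1) := Nat.pow_le_pow_right (by omega) (by omega)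
  -- key : (q - 1) * (Q ^ k - 1) ≤ q ^ finrank K U * (Q - 1)
  have key2 : Q ^ k - 1 ≤ B * (Q - 1) := by
    calc Q ^ k - 1 ≤ (q - 1) * (Q ^ k - 1) := Nat.le_mul_of_pos_left _ (by omega)
    _ ≤ q ^ finrank K U * (Q - 1) := key
    _ ≤ B * (Q - 1) := Nat.mul_le_mul_right _ hu_le
  have hmul : B * (Q - 1) + B = B * Q := by
    rw [← Nat.mul_succ]
    congr 1
    omega
  have hQk : 4 ≤ Q ^ k := by
    calc (4 : ℕ) ≤ Q := hQ4
    _ = Q ^ 1 := (pow_one Q).symm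
    _ ≤ Q ^ k := Nat.pow_le_pow_right (by omega) (by omega)
  omega


lemma finrank_span_singleton_le' (x : Fin k → L) [Fintype K] [Fintype L] :
    finrank K (Submodule.span K {x}) ≤ 1 := by
  haveI : Module.Finite K (Fin k → L) := Module.Finite.of_finite
  rcases eq_or_ne x 0 with rfl | hx
  · rw [Submodule.span_zero_singleton]
    simp [finrank_bot]
  · rw [finrank_span_singleton hx]

lemma construction_aux [Fintype K] [Fintype L] {k : ℕ}
    (hm : 2 ≤ finrank K L) (hk : 2 ≤ k) :
    ∃ U : Submodule K (Fin k → L),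
      finrank K U = finrank K L * (k - 1) + 1 ∧
      Submodule.span L (U : Set (Fin k → L)) = ⊤ ∧
      (RkCovers K U 1 ∧ ∀ r < 1, ¬ RkCovers K U r) := by
  classical
  haveI : NeZero k := ⟨by omega⟩
  haveI : Module.Finite K (Fin k → L) := Module.Finite.of_finite
  set e0 : Fin k → L := Pi.single 0 1 with he0
  have he00 : e0 0 = 1 := Pi.single_eq_same 0 1
  have he0ne : e0 ≠ 0 := fun h => one_ne_zero (by rw [← he00, h]; rfl)
  set H : Submodule L (Fin k → L) := LinearMap.ker (LinearMap.proj 0) with hH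
  refine ⟨(Submodule.span K {e0}) ⊔ H.restrictScalars K, ?_, ?_, ?_, ?_⟩
  · -- dimension
    have hdisj : (Submodule.span K {e0}) ⊓ H.restrictScalars K = ⊥ := by
      rw [eq_bot_iff]
      rintro x hx
      obtain ⟨hx1, hx2⟩ := Submodule.mem_inf.1 hx
      obtain ⟨c, rfl⟩ := Submodule.mem_span_singleton.1 hx1
      have hx0 : (c • e0) 0 = 0 := hx2
      have : algebraMap K L c = 0 := by
        simpa [he00, Algebra.smul_def] using hx0
      have hc : c = 0 := (map_eq_zero _).1 this
      simp [hc]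
    have hsum := Submodule.finrank_sup_add_finrank_inf_eq
      (Submodule.span K {e0}) (H.restrictScalars K)
    rw [hdisj, finrank_bot, finrank_span_singleton he0ne] at hsum
    have hHL : finrank L H = k - 1 := by
      have hsurj : Function.Surjective (LinearMap.proj (R := L) (φ := fun _ : Fin k => L) 0) :=
        fun y => ⟨Pi.single 0 y, by simp⟩
      have hrn := LinearMap.finrank_range_add_finrank_ker
        (LinearMap.proj (R := L) (φ := fun _ : Fin k => L) 0)
      rw [LinearMap.range_eq_top.2 hsurj, finrank_top, Module.finrank_pi,
        Module.finrank_self, Fintype.card_fin] at hrn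
      rw [hH]
      omega
    have hHK : finrank K (H.restrictScalars K) = finrank K L * (k - 1) := by
      have h := Module.finrank_mul_finrank K L ↥H
      rw [hHL] at h
      exact h.symm
    rw [hHK] at hsum
    omega
  · -- spans over L
    rw [eq_top_iff]
    rintro v -
    have h1 : v - v 0 • e0 ∈ (Submodule.span K {e0}) ⊔ H.restrictScalars K :=
      Submodule.mem_sup_right (by
        show (v - v 0 • e0) ∈ H
        show (v - v 0 • e0) 0 = 0
        simp [he00])
    have h2 : e0 ∈ (Submodule.span K {e0}) ⊔ H.restrictScalars K :=
      Submodule.mem_sup_left (Submodule.mem_span_singleton_self e0)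
    have := Submodule.add_mem _
      (Submodule.smul_mem _ (v 0) (Submodule.subset_span h2))
      (Submodule.subset_span h1)
    simpa using this
  · -- covers with radius 1
    intro v
    by_cases hv : v 0 = 0
    · refine ⟨Submodule.span K {v}, ?_, finrank_span_singleton_le' v,
        Submodule.subset_span (Submodule.mem_span_singleton_self v)⟩
      rw [Submodule.span_le, Set.singleton_subset_iff]
      exact Submodule.mem_sup_right hv
    · set u := (v 0)⁻¹ • v with hu
      have hu0 : u 0 = 1 := by
        simp [hu, inv_mul_cancel₀ hv]
      have h2 : e0 ∈ (Submodule.span K {e0}) ⊔ H.restrictScalars K :=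
        Submodule.mem_sup_left (Submodule.mem_span_singleton_self e0)
      have huU : u ∈ (Submodule.span K {e0}) ⊔ H.restrictScalars K := by
        have h3 : u - e0 ∈ (Submodule.span K {e0}) ⊔ H.restrictScalars K :=
          Submodule.mem_sup_right (by
            show (u - e0) 0 = 0
            simp [hu0, he00])
        have := Submodule.add_mem _ h2 h3
        simpa using this
      refine ⟨Submodule.span K {u}, ?_, finrank_span_singleton_le' u, ?_⟩
      · rw [Submodule.span_le, Set.singleton_subset_iff]
        exact huU
      · have hvu : v = v 0 • u := by
          rw [hu, smul_smul, mul_inv_cancel₀ hv, one_smul]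
        rw [hvu]
        exact Submodule.smul_mem _ _
          (Submodule.subset_span (Submodule.mem_span_singleton_self u))
  · -- minimality
    intro r hr hcov0
    have hr0 : r = 0 := by omega
    subst hr0
    obtain ⟨S, hSU, hS0, he⟩ := hcov0 e0
    have hSbot : S = ⊥ := Submodule.finrank_eq_zero.mp (Nat.le_zero.mp hS0)
    rw [hSbot, Submodule.bot_coe] at he
    rw [show ({0} : Set (Fin k → L)) = ↑(⊥ : Submodule L (Fin k → L)) by
      rw [Submodule.bot_coe], Submodule.span_eq ⊥] at he
    exact he0ne ((Submodule.mem_bot L).1 he)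

end Aux

/-- For all `m, k ≥ 2`, there exists a rank-`1`-saturating `[m(k-1)+1, k]_{q^m/q}`
system; consequently `s_{q^m/q}(k, 1) = m(k-1) + 1`. -/
theorem sMin_rho_one (K L : Type*) [Field K] [Field L] [Algebra K L]
    [Fintype K] [Fintype L] {k : ℕ}
    (hm : 2 ≤ Module.finrank K L) (hk : 2 ≤ k) :
    (∃ U : Submodule K (Fin k → L),
        Module.finrank K U = Module.finrank K L * (k - 1) + 1 ∧
        Submodule.span L (U : Set (Fin k → L)) = ⊤ ∧
        IsRankSat K U 1) ∧
      sMin K L k 1 = Module.finrank K L * (k - 1) + 1 := by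
  classical
  obtain ⟨U, hU1, hU2, hU3⟩ := construction_aux hm hk
  have hmem : Module.finrank K L * (k - 1) + 1 ∈
      {n : ℕ | ∃ U : Submodule K (Fin k → L),
        Module.finrank K U = n ∧ Submodule.span L (U : Set (Fin k → L)) = ⊤ ∧
          IsRankSat K U 1} := ⟨U, hU1, hU2, hU3⟩
  refine ⟨⟨U, hU1, hU2, hU3⟩, ?_⟩
  apply le_antisymm (Nat.sInf_le hmem)
  obtain ⟨V, hV1, hV2, hV3⟩ := Nat.sInf_mem (Set.nonempty_of_mem hmem)
  exact hV1 ▸ lower_bound_aux hm hk V hV3.1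
end

section
/- Let F_{q^m} = F_q[α] and 1 ≤ ρ ≤ min{k,m}. The F_q-subspace U = {(u,w) : u ∈ F_q^ρ, w ∈ F_{q^m}^{k-ρ}} of F_{q^m}^k (an [m(k-ρ)+ρ, k]_{q^m/q} system) is rank-ρ-saturating. In particular s_{q^m/q}(k,ρ) ≤ m(k-ρ)+ρ. -/
/-- The `[m(k-ρ)+ρ, k]_{q^m/q}` system `U = {(u, w) : u ∈ F_q^ρ, w ∈ F_{q^m}^{k-ρ}}`:
vectors of `F_{q^m}^k` whose first `ρ` coordinates lie in `F_q`. -/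
noncomputable def mixedSystem (K L : Type*) [Field K] [Field L] [Algebra K L]
    (k ρ : ℕ) : Submodule K (Fin k → L) :=
  ⨅ i : Fin k, ⨅ _ : (i : ℕ) < ρ,
    Submodule.comap (LinearMap.proj i : (Fin k → L) →ₗ[K] L)
      (LinearMap.range (Algebra.linearMap K L))

/-!
Covering: for `v ∈ F_{q^m}^k`, the vector `y = v - ∑_{i < ρ-1} v_i e_i` vanishes in its first
`ρ - 1` coordinates, so after dividing by `y_{ρ-1}` (when nonzero) it lies in `U`. Hence `v` is
in the `F_{q^m}`-span of the `ρ` vectors `e_0, …, e_{ρ-2}, y / y_{ρ-1}` of `U`.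

Minimality: choose `v` whose first `ρ` coordinates are `F_q`-linearly independent (possible
since `ρ ≤ m`). If `v ∈ ⟨S⟩_{F_{q^m}}` with `S ≤ U`, project onto the first `ρ` coordinates: the
image of `S` is an `F_q`-rational subspace. When its dimension is `< ρ`, some nonzero `F_q`-linear
form `c` vanishes on it, hence on its `F_{q^m}`-span, giving `∑ c_i v_i = 0`.
-/

theorem Submodule.finrank_pi_univ {K ι : Type*} [DivisionRing K] [Fintype ι] {φ : ι → Type*}
    [∀ i, AddCommGroup (φ i)] [∀ i, Module K (φ i)] (p : ∀ i, Submodule K (φ i))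
    [∀ i, Module.Finite K (p i)] :
    Module.finrank K (Submodule.pi Set.univ p) = ∑ i, Module.finrank K (p i) := by
  have hrange : LinearMap.range (LinearMap.piMap fun i => (p i).subtype) =
      Submodule.pi Set.univ p := by
    ext x
    simp only [LinearMap.mem_range, Submodule.mem_pi, Set.mem_univ, true_implies]
    exact ⟨fun ⟨y, hy⟩ i => hy ▸ (y i).2, fun h => ⟨fun i => ⟨x i, h i⟩, rfl⟩⟩
  have hinj : Function.Injective (LinearMap.piMap fun i => (p i).subtype) := fun y z h =>
    funext fun i => Subtype.ext (congrFun h i)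
  rw [← hrange, LinearMap.finrank_range_of_inj hinj, Module.finrank_pi_fintype]

section

variable {K L : Type*} [Field K] [Field L] [Algebra K L]

theorem rkCovers_of_forall_mem_span_range {ι ι' : Type*} [Fintype ι'] {U : Submodule K (ι → L)}
    (h : ∀ v : ι → L, ∃ u : ι' → ι → L, (∀ j, u j ∈ U) ∧ v ∈ Submodule.span L (Set.range u)) :
    RkCovers K U (Fintype.card ι') := by
  intro v
  obtain ⟨u, hu, hv⟩ := h v
  refine ⟨Submodule.span K (Set.range u), Submodule.span_le.2 (Set.range_subset_iff.2 hu),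
    finrank_range_le_card u, ?_⟩
  rwa [Submodule.span_span_of_tower]

theorem Submodule.exists_ne_zero_sum_mul_eq_zero_of_lt_top {ι : Type*} [Fintype ι]
    {W : Submodule K (ι → K)} (hW : W < ⊤) :
    ∃ c : ι → K, c ≠ 0 ∧ ∀ w ∈ W, ∑ i, w i * c i = 0 := by
  classical
  obtain ⟨φ, hφ0, hφW⟩ := W.exists_dual_map_eq_bot_of_lt_top hW inferInstance
  have hφ := φ.pi_apply_eq_sum_univ
  refine ⟨fun i => φ fun j => if i = j then 1 else 0, fun hc => hφ0 ?_, fun w hw => ?_⟩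
  · refine LinearMap.ext fun w => ?_
    simp [hφ w, funext_iff.1 hc]
  · have hφw : φ w ∈ W.map φ := Submodule.mem_map_of_mem hw
    rw [hφW, Submodule.mem_bot, hφ] at hφw
    exact hφw

theorem card_le_finrank_of_mem_span_of_linearIndependent {ι : Type*} [Fintype ι]
    {T : Submodule K (ι → L)} (hT : T ≤ LinearMap.range ((Algebra.linearMap K L).compLeft ι))
    {x : ι → L} (hx : x ∈ Submodule.span L (T : Set (ι → L))) (hli : LinearIndependent K x) :
    Fintype.card ι ≤ Module.finrank K T := by
  set E := (Algebra.linearMap K L).compLeft ι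
  have hE : Function.Injective E := fun y z h =>
    funext fun i => (algebraMap K L).injective (congrFun h i)
  set W := T.comap E
  have hWT : W.map E = T := Submodule.map_comap_eq_of_le hT
  by_contra! hlt
  have hW : W < ⊤ := by
    refine lt_top_iff_ne_top.2 fun htop => hlt.ne' ?_
    calc Fintype.card ι = Module.finrank K W := by
          rw [htop, finrank_top, Module.finrank_fintype_fun_eq_card]
      _ = Module.finrank K T := by rw [(W.equivMapOfInjective E hE).finrank_eq, hWT]
  obtain ⟨c, hc0, hcW⟩ := Submodule.exists_ne_zero_sum_mul_eq_zero_of_lt_top hW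
  let Λ : (ι → L) →ₗ[L] L := ∑ i, c i • LinearMap.proj i
  have hΛ : ∀ y, Λ y = ∑ i, c i • y i := fun y => by simp [Λ]
  have hTΛ : (T : Set (ι → L)) ⊆ LinearMap.ker Λ := by
    rw [← hWT]
    rintro _ ⟨w, hw, rfl⟩
    rw [SetLike.mem_coe, LinearMap.mem_ker, hΛ]
    calc ∑ i, c i • E w i = algebraMap K L (∑ i, w i * c i) := by
          simp [E, Algebra.smul_def, mul_comm]
      _ = 0 := by rw [hcW w hw, map_zero]
  have hΛx : ∑ i, c i • x i = 0 := by
    rw [← hΛ, ← LinearMap.mem_ker]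
    exact Submodule.span_le.2 hTΛ hx
  exact hc0 (funext (Fintype.linearIndependent_iff.1 hli c hΛx))

end

section

variable {K L : Type*} [Field K] [Field L] [Algebra K L] {k ρ : ℕ}

theorem mixedSystem_eq_pi :
    mixedSystem K L k ρ = Submodule.pi Set.univ fun i : Fin k =>
      ⨅ _ : (i : ℕ) < ρ, LinearMap.range (Algebra.linearMap K L) := by
  simp_rw [mixedSystem, ← Submodule.comap_iInf]
  exact Submodule.iInf_comap_proj

theorem mem_mixedSystem_iff {x : Fin k → L} :
    x ∈ mixedSystem K L k ρ ↔ ∀ i : Fin k, (i : ℕ) < ρ → x i ∈ Set.range (algebraMap K L) := by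
  simp [mixedSystem_eq_pi, Submodule.mem_pi, Submodule.mem_iInf]

theorem finrank_mixedSystem [Module.Finite K L] (hρk : ρ ≤ k) :
    Module.finrank K (mixedSystem K L k ρ) = Module.finrank K L * (k - ρ) + ρ := by
  classical
  have hrange : Module.finrank K (LinearMap.range (Algebra.linearMap K L)) = 1 := by
    rw [LinearMap.finrank_range_of_inj (algebraMap K L).injective, Module.finrank_self]
  have hcoord : ∀ i : Fin k,
      Module.finrank K (⨅ _ : (i : ℕ) < ρ, LinearMap.range (Algebra.linearMap K L) :
        Submodule K L) =
        if (i : ℕ) < ρ then 1 else Module.finrank K L := by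
    intro i
    split_ifs with hi
    · rw [iInf_pos hi, hrange]
    · rw [iInf_neg hi, finrank_top]
  have hcard_lt : (Finset.univ.filter fun i : Fin k => (i : ℕ) < ρ).card = ρ := by
    rw [Fin.card_filter_val_lt, min_eq_right hρk]
  have hcard_ge : (Finset.univ.filter fun i : Fin k => ¬(i : ℕ) < ρ).card = k - ρ := by
    have := Finset.card_filter_add_card_filter_not (s := Finset.univ) fun i : Fin k => (i : ℕ) < ρ
    rw [hcard_lt, Finset.card_univ, Fintype.card_fin] at this
    omega
  rw [mixedSystem_eq_pi, Submodule.finrank_pi_univ, Finset.sum_congr rfl fun i _ => hcoord i,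
    Finset.sum_ite, Finset.sum_const, Finset.sum_const, hcard_lt, hcard_ge, smul_eq_mul,
    smul_eq_mul, mul_one, mul_comm, add_comm]

theorem single_one_mem_mixedSystem (i : Fin k) : Pi.single i 1 ∈ mixedSystem K L k ρ := by
  rw [mem_mixedSystem_iff]
  intro j _
  rcases eq_or_ne j i with rfl | hji
  · exact ⟨1, by simp⟩
  · exact ⟨0, by simp [hji]⟩

theorem span_mixedSystem_eq_top :
    Submodule.span L (mixedSystem K L k ρ : Set (Fin k → L)) = ⊤ := by
  rw [eq_top_iff, ← (Pi.basisFun L (Fin k)).span_eq, Submodule.span_le]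
  rintro _ ⟨i, rfl⟩
  exact Submodule.subset_span (by simpa using single_one_mem_mixedSystem i)

theorem exists_mem_mixedSystem_smul_eq {n : ℕ} (hnk : n < k) {y : Fin k → L}
    (hy : ∀ i : Fin k, (i : ℕ) < n → y i = 0) :
    ∃ z ∈ mixedSystem K L k (n + 1), ∃ a : L, a • z = y := by
  set p : Fin k := ⟨n, hnk⟩
  have hlt : ∀ i : Fin k, (i : ℕ) < n + 1 → (i : ℕ) < n ∨ i = p := fun i hi => by
    rcases Nat.lt_succ_iff_lt_or_eq.1 hi with h | h
    · exact .inl h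
    · exact .inr (Fin.ext h)
  by_cases hp : y p = 0
  · refine ⟨y, mem_mixedSystem_iff.2 fun i hi => ⟨0, ?_⟩, 1, one_smul L y⟩
    rcases hlt i hi with h | rfl
    · simp [hy i h]
    · simp [hp]
  · refine ⟨(y p)⁻¹ • y, mem_mixedSystem_iff.2 fun i hi => ?_, y p, smul_inv_smul₀ hp y⟩
    rcases hlt i hi with h | rfl
    · exact ⟨0, by simp [hy i h]⟩
    · exact ⟨1, by simp [hp]⟩

theorem rkCovers_mixedSystem (hρ : 1 ≤ ρ) (hρk : ρ ≤ k) :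
    RkCovers K (mixedSystem K L k ρ) ρ := by
  obtain ⟨n, rfl⟩ : ∃ n, ρ = n + 1 := ⟨ρ - 1, by omega⟩
  have hnk : n ≤ k := by omega
  set e : Fin n → Fin k → L := fun j => Pi.single (Fin.castLE hnk j) 1
  suffices h : ∀ v : Fin k → L, ∃ u : Option (Fin n) → Fin k → L,
      (∀ j, u j ∈ mixedSystem K L k (n + 1)) ∧ v ∈ Submodule.span L (Set.range u) by
    simpa using rkCovers_of_forall_mem_span_range h
  intro v
  set x := ∑ j, v (Fin.castLE hnk j) • e j
  have hx : ∀ i : Fin k, (i : ℕ) < n → x i = v i := by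
    intro i hi
    rw [show x i = _ from Finset.sum_apply i _ _, Finset.sum_eq_single ⟨i, hi⟩]
    · simp [e]
    · intro j _ hj
      have hij : (i : ℕ) ≠ j := fun h => hj (Fin.ext h.symm)
      simp [e, Fin.ext_iff, hij]
    · simp
  obtain ⟨z, hz, a, haz⟩ := exists_mem_mixedSystem_smul_eq (K := K) (by omega : n < k)
    (y := v - x) fun i hi => by simp [hx i hi]
  refine ⟨fun o => o.elim z e, fun o => o.rec hz fun j => single_one_mem_mixedSystem _, ?_⟩
  rw [Submodule.mem_span_range_iff_exists_fun]
  refine ⟨fun o => o.elim a fun j => v (Fin.castLE hnk j), ?_⟩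
  simp [Fintype.sum_option, haz, x]

theorem not_rkCovers_mixedSystem (hρk : ρ ≤ k) (hρm : ρ ≤ Module.finrank K L) {r : ℕ}
    (hr : r < ρ) : ¬ RkCovers K (mixedSystem K L k ρ) r := by
  have : Module.Finite K L := Module.finite_of_finrank_pos (by omega)
  obtain ⟨b, hb⟩ := exists_linearIndependent_of_le_finrank hρm
  intro hcov
  obtain ⟨S, hSU, hSr, hvS⟩ := hcov fun i => if h : (i : ℕ) < ρ then b ⟨i, h⟩ else 0
  let π : (Fin k → L) →ₗ[L] Fin ρ → L := LinearMap.funLeft L L (Fin.castLE hρk)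
  have hrat : S.map (π.restrictScalars K) ≤
      LinearMap.range ((Algebra.linearMap K L).compLeft (Fin ρ)) := by
    rw [LinearMap.range_compLeft]
    rintro _ ⟨x, hx, rfl⟩ i -
    exact mem_mixedSystem_iff.1 (hSU hx) (Fin.castLE hρk i) i.isLt
  have hspan : b ∈ Submodule.span L (S.map (π.restrictScalars K) : Set (Fin ρ → L)) := by
    rw [Submodule.map_coe, LinearMap.coe_restrictScalars, Submodule.span_image]
    convert Submodule.mem_map_of_mem (f := π) hvS
    ext j
    simp [π]
  have hcard := card_le_finrank_of_mem_span_of_linearIndependent hrat hspan hb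
  have hmap := (Submodule.finrank_map_le (π.restrictScalars K) S).trans hSr
  rw [Fintype.card_fin] at hcard
  omega

end

theorem mixedSystem_rankSat_general (K L : Type*) [Field K] [Field L] [Algebra K L]
    {k ρ : ℕ}
    (hρ : 1 ≤ ρ) (hρk : ρ ≤ k) (hρm : ρ ≤ Module.finrank K L) :
    IsRankSat K (mixedSystem K L k ρ) ρ ∧
      sMin K L k ρ ≤ Module.finrank K L * (k - ρ) + ρ := by
  have : Module.Finite K L := Module.finite_of_finrank_pos (by omega)
  have hsat : IsRankSat K (mixedSystem K L k ρ) ρ :=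
    ⟨rkCovers_mixedSystem hρ hρk, fun r hr => not_rkCovers_mixedSystem hρk hρm hr⟩
  exact ⟨hsat, Nat.sInf_le ⟨_, finrank_mixedSystem hρk, span_mixedSystem_eq_top, hsat⟩⟩

/-- For `1 ≤ ρ ≤ min{k, m}`, the system `{(u,w) : u ∈ F_q^ρ, w ∈ F_{q^m}^{k-ρ}}` is
rank-`ρ`-saturating; in particular `s_{q^m/q}(k, ρ) ≤ m(k-ρ) + ρ`. -/
theorem mixedSystem_rankSat (K L : Type*) [Field K] [Field L] [Algebra K L]
    [Fintype K] [Fintype L] {k ρ : ℕ}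
    (hρ : 1 ≤ ρ) (hρk : ρ ≤ k) (hρm : ρ ≤ Module.finrank K L) :
    IsRankSat K (mixedSystem K L k ρ) ρ ∧
      sMin K L k ρ ≤ Module.finrank K L * (k - ρ) + ρ :=
  mixedSystem_rankSat_general K L hρ hρk hρm
end

section
/- For all r ≥ 2 and every prime power q, s_{q^{2r}/q}(2r, 2r - 1) = 2r + 1. -/
/-! Fix a `K`-basis `c` of `L` and let `m = [L : K]`. Through `c`, a vector `w ∈ L^m` is the
`K`-linear map `z ↦ ∑ i, (c-coordinate i of z) • w i` of `L` to itself (`pairing`): `K^m` becomes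
the `K`-valued maps and `(c i)_i` the identity, so the system `U = K^m ⊕ K (c i)_i` becomes
`{φ + μ • id}`. A map vanishing on a subspace `V ⊆ L` comes from the `L`-span of an
`(m - dim V)`-dimensional subspace of `K^m`; conversely, if `v` lies in the `L`-span of a
`d`-dimensional `S ≤ K^m ⊕ K p`, its map is proportional to that of `p` on a subspace of dimension
`m - d`.

Covering with radius `m - 1`: if the map `θ` of `v` is not injective, use its kernel. Otherwise
count the pairs `(μ, x)` with `θ x = λ (x + μ)`: for some `λ` these `x` form a subspace `V` of
dimension at least `2`, and subtracting `λ B` for a suitable `B ∈ U` makes `θ` vanish on `V`.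
No covering with radius `m - 2`: for `θ` the Frobenius, `z ^ q = λ z` has at most a line of
solutions, as the ratio of two solutions is fixed by Frobenius. Lower bound: an `m`-dimensional
spanning system is `K^m` in suitable coordinates, where the vector with `θ = id` needs `d = m`. -/

section

open Module Submodule Finset

variable {K L : Type*} [Field K] [Field L] [Algebra K L]

section Frobenius

variable [Fintype K] [Finite L]

theorem mem_range_algebraMap_of_pow_card_eq_self {x : L} (hx : x ^ Fintype.card K = x) :
    x ∈ Set.range (algebraMap K L) := by
  rw [IsGalois.mem_range_algebraMap_iff_fixed]
  intro f
  obtain ⟨n, rfl⟩ := (FiniteField.bijective_frobeniusAlgEquivOfAlgebraic_pow K L).2 f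
  rw [AlgEquiv.coe_pow]
  exact Function.iterate_fixed hx _

theorem finrank_le_one_of_forall_pow_card_eq_mul (V : Submodule K L) (lam : L)
    (hV : ∀ z ∈ V, z ^ Fintype.card K = lam * z) : finrank K V ≤ 1 := by
  by_cases h : ∃ x ∈ V, x ≠ 0
  · obtain ⟨x, hxV, hx⟩ := h
    have hlam : lam ≠ 0 := by
      rintro rfl
      exact hx (by simpa using hV x hxV)
    refine finrank_le_one ⟨x, hxV⟩ fun ⟨y, hyV⟩ => ?_
    obtain ⟨μ, hμ⟩ := mem_range_algebraMap_of_pow_card_eq_self (K := K) (x := y / x) <| by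
      rw [div_pow, hV x hxV, hV y hyV, mul_div_mul_left _ _ hlam]
    refine ⟨μ, Subtype.ext ?_⟩
    simp [Algebra.smul_def, hμ, div_mul_cancel₀ _ hx]
  · push Not at h
    rw [(Submodule.eq_bot_iff V).2 h, finrank_bot]
    exact zero_le_one

end Frobenius

section Counting

variable [Fintype L]

theorem card_lt_natCard_comap_span_singleton (θ : L →ₗ[K] L) {lam : L} (hlam : lam ≠ 0)
    {s : Finset (K × L)} (hs : ∀ p ∈ s, p.2 ≠ 0 ∧ θ p.2 = lam * (p.2 + algebraMap K L p.1)) :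
    #s < Nat.card ((K ∙ lam).comap (θ - lam • LinearMap.id)) := by
  classical
  set V := (K ∙ lam).comap (θ - lam • LinearMap.id)
  have hle : #s ≤ #((univ.filter (· ∈ V)).erase 0) := by
    refine card_le_card_of_injOn Prod.snd (fun p hp => ?_) fun p hp p' hp' h => ?_
    · obtain ⟨hp0, hθp⟩ := hs p hp
      simp only [coe_erase, coe_filter, mem_univ, true_and, Set.mem_sdiff, Set.mem_ofPred_eq,
        Set.mem_singleton_iff]
      refine ⟨mem_comap.2 (mem_span_singleton.2 ⟨p.1, ?_⟩), hp0⟩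
      rw [LinearMap.sub_apply, LinearMap.smul_apply, LinearMap.id_apply, smul_eq_mul, hθp,
        Algebra.smul_def]
      ring
    · have e := (hs p hp).2.symm.trans (h ▸ (hs p' hp').2)
      rw [h] at e
      ext
      · exact (algebraMap K L).injective
          (add_left_cancel (mul_left_cancel₀ hlam e))
      · exact h
  rw [card_erase_of_mem (by simp), ← Fintype.card_subtype, ← Nat.card_eq_fintype_card] at hle
  have : 0 < Nat.card V := Nat.card_pos
  omega

variable [Fintype K]

theorem card_mul_lt_card_filter_add_algebraMap_ne_zero [DecidableEq L]
    (hKL : Fintype.card K < Fintype.card L) :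
    (Fintype.card L - 1) * (Fintype.card K - 1) <
      #{p ∈ (univ : Finset K) ×ˢ univ.erase (0 : L) | p.2 + algebraMap K L p.1 ≠ 0} := by
  classical
  set D₀ := (univ : Finset K) ×ˢ univ.erase (0 : L)
  have hbad : #{p ∈ D₀ | ¬ p.2 + algebraMap K L p.1 ≠ 0} ≤ #(univ.erase (0 : K)) := by
    refine card_le_card_of_injOn Prod.fst (fun p hp => ?_) fun p hp p' hp' h => ?_
    · simp only [D₀, not_not, coe_filter, mem_product, mem_erase, Set.mem_ofPred_eq] at hp
      simp only [coe_erase, coe_univ, Set.mem_sdiff, Set.mem_univ, Set.mem_singleton_iff, true_and]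
      rintro h0
      exact hp.1.2.1 (by simpa [h0] using hp.2)
    · simp only [D₀, not_not, coe_filter, mem_product, Set.mem_ofPred_eq] at hp hp'
      ext
      · exact h
      · rw [eq_neg_of_add_eq_zero_left hp.2, eq_neg_of_add_eq_zero_left hp'.2, h]
  have hsplit := card_filter_add_card_filter_not (s := D₀)
    (fun p : K × L => p.2 + algebraMap K L p.1 ≠ 0)
  simp only [D₀, card_product, card_univ, card_erase_of_mem (mem_univ _)] at hbad hsplit
  have hK : 1 ≤ Fintype.card K := Fintype.card_pos
  zify [hK, (by omega : 1 ≤ Fintype.card L)] at *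
  nlinarith

theorem exists_two_le_finrank_comap_span_singleton (hL : 2 ≤ finrank K L) (θ : L →ₗ[K] L)
    (hθ : Function.Injective θ) :
    ∃ lam : L, 2 ≤ finrank K ((K ∙ lam).comap (θ - lam • LinearMap.id)) := by
  classical
  -- `(μ, x) ∈ D` puts `x` into the subspace of `λ = θ x / (x + μ) ≠ 0`; as `D` has more than
  -- `(|L| - 1)(q - 1)` elements, some `λ` receives at least `q` of them.
  have hq : 1 < Fintype.card K := Fintype.one_lt_card
  have hqL : Fintype.card K < Fintype.card L := by
    rw [card_eq_pow_finrank (K := K) (V := L)]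
    simpa using Nat.pow_lt_pow_right hq hL
  set D := {p ∈ (univ : Finset K) ×ˢ univ.erase (0 : L) | p.2 + algebraMap K L p.1 ≠ 0}
  set f : K × L → L := fun p => θ p.2 / (p.2 + algebraMap K L p.1)
  have hfD : ∀ p ∈ D, f p ∈ univ.erase 0 := fun p hp => by
    simp only [D, mem_filter, mem_product, mem_erase] at hp
    exact mem_erase.2 ⟨div_ne_zero ((map_ne_zero_iff θ hθ).2 hp.1.2.1) hp.2, mem_univ _⟩
  obtain ⟨lam, hlam, hfiber⟩ := exists_lt_card_fiber_of_mul_lt_card_of_maps_to hfD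
    (by simpa using card_mul_lt_card_filter_add_algebraMap_ne_zero hqL)
  refine ⟨lam, ?_⟩
  have hcard := card_lt_natCard_comap_span_singleton θ (ne_of_mem_erase hlam)
    (s := {p ∈ D | f p = lam}) fun p hp => by
      simp only [D, mem_filter, mem_product, mem_erase] at hp
      exact ⟨hp.1.1.2.1, by rw [← hp.2, div_mul_cancel₀ _ hp.1.2]⟩
  by_contra! h
  rw [natCard_eq_pow_finrank (K := K), Nat.card_eq_fintype_card (α := K)] at hcard
  have := Nat.pow_le_pow_right (by omega : 0 < Fintype.card K) (Nat.le_of_lt_succ h)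
  rw [pow_one] at this
  omega

end Counting

theorem span_range_subtype_comp_basis {ι M : Type*} [AddCommGroup M] [Module K M]
    (U : Submodule K M) (bU : Basis ι K U) : span K (Set.range (U.subtype ∘ bU)) = U := by
  rw [Set.range_comp, span_image, bU.span_eq, map_subtype_top]

theorem finrank_le_finrank_of_span_eq_top {M : Type*} [AddCommGroup M] [Module L M] [Module K M]
    [IsScalarTower K L M] [Module.Finite K M] {U : Submodule K M}
    (h : span L (U : Set M) = ⊤) : finrank L M ≤ finrank K U := by
  have := finrank_range_le_card (R := L) (U.subtype ∘ Module.finBasis K U)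
  rwa [Set.finrank, ← span_span_of_tower K, span_range_subtype_comp_basis, h, finrank_top,
    Fintype.card_fin] at this

section Pairing

variable {ι M : Type*} [Fintype ι] [AddCommGroup M] [Module L M]
  (c : Basis ι K L) (b : Basis ι L M)

noncomputable def pairing : M ≃ₗ[L] (L →ₗ[K] L) :=
  b.equivFun.trans (c.constr L)

theorem pairing_basis (i : ι) :
    pairing c b (b i) = Algebra.linearMap K L ∘ₗ c.coord i := by
  classical
  ext z
  simp [pairing, Basis.constr_apply_fintype, Finsupp.single_apply, Algebra.algebraMap_eq_smul_one]

variable [Module K M] [IsScalarTower K L M]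

theorem pairing_sum_smul_basis (φ : Module.Dual K L) :
    pairing c b (∑ i, φ (c i) • b i) = Algebra.linearMap K L ∘ₗ φ := by
  classical
  refine c.ext fun j => ?_
  simp only [← algebraMap_smul L (φ _), map_sum, map_smul, pairing_basis]
  simp [Finsupp.single_apply, Algebra.algebraMap_eq_smul_one]

theorem mem_span_range_iff_exists_pairing_eq {y : M} :
    y ∈ span K (Set.range b) ↔
      ∃ φ : Module.Dual K L, pairing c b y = Algebra.linearMap K L ∘ₗ φ := by
  constructor
  · intro hy
    have hle : span K (Set.range b) ≤ (LinearMap.range (LinearMap.compRight K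
        (Algebra.linearMap K L))).comap ((pairing c b).toLinearMap.restrictScalars K) :=
      span_le.2 (Set.range_subset_iff.2 fun i => ⟨c.coord i, (pairing_basis c b i).symm⟩)
    obtain ⟨φ, hφ⟩ := hle hy
    exact ⟨φ, hφ.symm⟩
  · rintro ⟨φ, hφ⟩
    rw [← (pairing c b).injective ((pairing_sum_smul_basis c b φ).trans hφ.symm)]
    exact sum_mem fun i _ => smul_mem _ _ (subset_span ⟨i, rfl⟩)

theorem exists_le_span_range_mem_span_of_pairing_eq_zero (V : Submodule K L) (w : M)
    (hw : ∀ z ∈ V, pairing c b w z = 0) :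
    ∃ S ≤ span K (Set.range b),
      finrank K S + finrank K V ≤ finrank K L ∧ w ∈ span L (S : Set M) := by
  have : FiniteDimensional K L := c.finiteDimensional_of_finite
  set P := pairing c b
  let Ψ : Module.Dual K L →ₗ[K] M := P.symm.toLinearMap.restrictScalars K ∘ₗ
    LinearMap.compRight K (Algebra.linearMap K L)
  have hΨ : ∀ φ, P (Ψ φ) = Algebra.linearMap K L ∘ₗ φ := fun φ => P.apply_symm_apply _
  refine ⟨V.dualAnnihilator.map Ψ, ?_, ?_, ?_⟩
  · rintro _ ⟨φ, -, rfl⟩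
    exact (mem_span_range_iff_exists_pairing_eq c b).2 ⟨φ, hΨ φ⟩
  · calc _ ≤ finrank K V.dualAnnihilator + finrank K V := by
          gcongr; exact finrank_map_le _ _
      _ = finrank K L := by rw [add_comm, Subspace.finrank_add_finrank_dualAnnihilator_eq]
  · have hw' : w = ∑ β, c β • Ψ (c.coord β ∘ₗ P w) := by
      apply P.injective
      ext z
      simp only [map_sum, map_smul, hΨ, LinearMap.coe_sum, Finset.sum_apply, LinearMap.smul_apply,
        LinearMap.comp_apply, Algebra.linearMap_apply, Basis.coord_apply, smul_eq_mul]
      exact (c.sum_repr _).symm.trans (Finset.sum_congr rfl fun x _ => by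
        rw [Algebra.smul_def, mul_comm])
    rw [hw']
    refine sum_mem fun β _ => smul_mem _ _ (subset_span (mem_map_of_mem ?_))
    exact (mem_dualAnnihilator _).2 fun z hz => by simp [hw z hz]

theorem exists_pairing_eq_mul_of_mem_span (p : M) {S : Submodule K M}
    (hS : S ≤ span K (Set.range b) ⊔ K ∙ p) {v : M} (hv : v ∈ span L (S : Set M)) :
    ∃ lam : L, ∃ V : Submodule K L, finrank K L ≤ finrank K S + finrank K V ∧
      ∀ z ∈ V, pairing c b v z = lam * pairing c b p z := by
  have : FiniteDimensional K L := c.finiteDimensional_of_finite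
  have : Module.Finite L M := Module.Finite.of_basis b
  have : Module.Finite K M := Module.Finite.trans L M
  set P := pairing c b
  set g : Fin (finrank K S) → M := S.subtype ∘ Module.finBasis K S
  have hg : ∀ j, ∃ φ : Module.Dual K L, ∃ t : K,
      P (g j) = Algebra.linearMap K L ∘ₗ φ + t • P p := fun j => by
    obtain ⟨y, hy, z, hz, hyz⟩ := mem_sup.1 (hS (Module.finBasis K S j).2)
    obtain ⟨φ, hφ⟩ := (mem_span_range_iff_exists_pairing_eq c b).1 hy
    obtain ⟨t, rfl⟩ := mem_span_singleton.1 hz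
    refine ⟨φ, t, ?_⟩
    simp only [g, Function.comp_apply, subtype_apply, ← hyz, map_add]
    rw [← algebraMap_smul L t p, map_smul, algebraMap_smul]
    exact congrArg (· + t • P p) hφ
  choose φ t hφt using hg
  obtain ⟨γ, rfl⟩ : ∃ γ : Fin (finrank K S) → L, ∑ j, γ j • g j = v := by
    refine (mem_span_range_iff_exists_fun L).1 ?_
    rwa [← span_span_of_tower K, span_range_subtype_comp_basis]
  refine ⟨∑ j, γ j * algebraMap K L (t j), LinearMap.ker (LinearMap.pi φ), ?_, fun z hz => ?_⟩
  · have := LinearMap.finrank_range_add_finrank_ker (LinearMap.pi φ)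
    have := (LinearMap.range (LinearMap.pi φ)).finrank_le
    simp only [finrank_fin_fun] at this
    omega
  · have hφz : ∀ j, φ j z = 0 := fun j => congr_fun (LinearMap.mem_ker.1 hz) j
    simp [map_sum, hφt, hφz, Finset.sum_mul, Algebra.smul_def, mul_assoc]

end Pairing

theorem RkCovers.mono {ι : Type*} {U : Submodule K (ι → L)} {r r' : ℕ} (h : RkCovers K U r)
    (hr : r ≤ r') : RkCovers K U r' :=
  fun v => (h v).imp fun _ ⟨hSU, hS, hv⟩ => ⟨hSU, hS.trans hr, hv⟩

theorem not_rkCovers_of_finrank_eq {ι : Type*} [Fintype ι] (c : Basis ι K L)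
    {U : Submodule K (ι → L)} (hU : finrank K U = finrank K L)
    (hspan : span L (U : Set (ι → L)) = ⊤) : ¬ RkCovers K U (finrank K L - 1) := by
  have : FiniteDimensional K L := c.finiteDimensional_of_finite
  let bU : Basis ι K U := (Module.finBasisOfFinrankEq K U
    (hU.trans (finrank_eq_card_basis c))).reindex (Fintype.equivFin ι).symm
  let b : Basis ι L (ι → L) := basisOfTopLeSpanOfCardEqFinrank (U.subtype ∘ bU)
    (by rw [← span_span_of_tower K, span_range_subtype_comp_basis, hspan]) (by simp)
  have hb : span K (Set.range b) = U := by
    rw [coe_basisOfTopLeSpanOfCardEqFinrank, span_range_subtype_comp_basis]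
  intro hcov
  obtain ⟨S, hSU, hS, hv⟩ := hcov ((pairing c b).symm LinearMap.id)
  obtain ⟨lam, V, hdim, hV⟩ := exists_pairing_eq_mul_of_mem_span c b 0
    (hSU.trans (hb ▸ le_sup_left)) hv
  have : V = ⊥ := eq_bot_iff.2 fun z hz => by simpa using hV z hz
  rw [this, finrank_bot] at hdim
  have := finrank_pos (R := K) (M := L)
  omega

section System

variable {ι : Type*} [Fintype ι] (c : Basis ι K L) (b : Basis ι L (ι → L))

/-- For the standard basis `b = Pi.basisFun L ι` this is `K^ι ⊕ K (c i)_i`. -/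
noncomputable def subgeometrySystem : Submodule K (ι → L) :=
  span K (Set.range b) ⊔ K ∙ (pairing c b).symm LinearMap.id

theorem span_subgeometrySystem : span L (subgeometrySystem c b : Set (ι → L)) = ⊤ :=
  eq_top_iff.2 <| b.span_eq.ge.trans <| span_mono <|
    (subset_span (R := K)).trans (le_sup_left (a := span K (Set.range b)))

theorem finrank_subgeometrySystem_le : finrank K (subgeometrySystem c b) ≤ finrank K L + 1 := by
  have : FiniteDimensional K L := c.finiteDimensional_of_finite
  have : Module.Finite L (ι → L) := Module.Finite.of_basis b
  have : Module.Finite K (ι → L) := Module.Finite.trans L (ι → L)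
  calc _ ≤ finrank K (span K (Set.range b)) + finrank K (K ∙ (pairing c b).symm LinearMap.id) :=
        finrank_add_le_finrank_add_finrank _ _
    _ ≤ Fintype.card ι + 1 := by
        gcongr
        · exact finrank_range_le_card _
        · simpa using finrank_span_le_card (R := K) {(pairing c b).symm LinearMap.id}
    _ = finrank K L + 1 := by rw [finrank_eq_card_basis c]

theorem exists_mem_subgeometrySystem_pairing_sub_smul_eq_zero [Fintype K] [Fintype L]
    (hL : 2 ≤ finrank K L) {v : ι → L} (hv : Function.Injective (pairing c b v)) :
    ∃ B ∈ subgeometrySystem c b, ∃ lam : L, ∃ V : Submodule K L,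
      2 ≤ finrank K V ∧ ∀ z ∈ V, pairing c b (v - lam • B) z = 0 := by
  set θ := pairing c b v
  obtain ⟨lam, hV⟩ := exists_two_le_finrank_comap_span_singleton hL θ hv
  have hlam : lam ≠ 0 := by
    rintro rfl
    have : (K ∙ (0 : L)).comap (θ - (0 : L) • LinearMap.id) = ⊥ := by
      simpa [LinearMap.ker_eq_bot] using hv
    rw [this, finrank_bot] at hV
    omega
  obtain ⟨π, hπ⟩ := Module.Projective.exists_dual_eq_one K hlam
  -- on `V`, `θ z - lam * z = t • lam` with `t = π (θ z - lam * z)`, so `θ = lam • f` there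
  set f := LinearMap.id + Algebra.linearMap K L ∘ₗ π ∘ₗ (θ - lam • LinearMap.id)
  refine ⟨(pairing c b).symm f, ?_, lam, _, hV, fun z hz => ?_⟩
  · simp only [f, map_add]
    exact add_mem (mem_sup_right (mem_span_singleton_self _)) (mem_sup_left
      ((mem_span_range_iff_exists_pairing_eq c b).2 ⟨_, LinearEquiv.apply_symm_apply _ _⟩))
  · obtain ⟨t, ht⟩ := mem_span_singleton.1 (mem_comap.1 hz)
    simp only [map_sub, map_smul, LinearEquiv.apply_symm_apply, LinearMap.sub_apply,
      LinearMap.smul_apply, f, LinearMap.add_apply, LinearMap.id_apply, LinearMap.comp_apply,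
      Algebra.linearMap_apply, ← ht, hπ, smul_eq_mul, mul_one]
    rw [LinearMap.sub_apply, LinearMap.smul_apply, LinearMap.id_apply, smul_eq_mul,
      Algebra.smul_def] at ht
    linear_combination -ht

theorem rkCovers_subgeometrySystem [Fintype K] [Fintype L] (hL : 2 ≤ finrank K L) :
    RkCovers K (subgeometrySystem c b) (finrank K L - 1) := by
  intro v
  by_cases hv : Function.Injective (pairing c b v)
  · obtain ⟨B, hB, lam, V, hV, hvB⟩ :=
      exists_mem_subgeometrySystem_pairing_sub_smul_eq_zero c b hL hv
    obtain ⟨S, hSb, hSV, hS⟩ := exists_le_span_range_mem_span_of_pairing_eq_zero c b V _ hvB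
    refine ⟨S ⊔ K ∙ B, sup_le (hSb.trans le_sup_left) ((span_singleton_le_iff_mem _ _).2 hB),
      ?_, ?_⟩
    · calc finrank K ↥(S ⊔ K ∙ B) ≤ finrank K S + finrank K (K ∙ B) :=
            finrank_add_le_finrank_add_finrank _ _
        _ ≤ finrank K S + 1 := by gcongr; simpa using finrank_span_le_card (R := K) {B}
        _ ≤ finrank K L - 1 := by omega
    · have := add_mem (span_mono (le_sup_left : S ≤ S ⊔ K ∙ B) hS)
        (smul_mem _ lam (subset_span (mem_sup_right (mem_span_singleton_self B))))
      simpa using this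
  · obtain ⟨S, hSb, hSV, hS⟩ := exists_le_span_range_mem_span_of_pairing_eq_zero c b
      (LinearMap.ker (pairing c b v)) v fun z hz => hz
    refine ⟨S, hSb.trans le_sup_left, ?_, hS⟩
    have : 1 ≤ finrank K (LinearMap.ker (pairing c b v)) := Nat.one_le_iff_ne_zero.2 fun h =>
      hv (LinearMap.ker_eq_bot.1 (Submodule.finrank_eq_zero.1 h))
    omega

theorem not_rkCovers_subgeometrySystem [Fintype K] [Fintype L] (hL : 2 ≤ finrank K L) :
    ¬ RkCovers K (subgeometrySystem c b) (finrank K L - 2) := by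
  intro hcov
  obtain ⟨S, hSU, hS, hv⟩ :=
    hcov ((pairing c b).symm (FiniteField.frobeniusAlgHom K L).toLinearMap)
  obtain ⟨lam, V, hdim, hV⟩ := exists_pairing_eq_mul_of_mem_span c b _ hSU hv
  have := finrank_le_one_of_forall_pow_card_eq_mul V lam fun z hz => by simpa using hV z hz
  omega

theorem isRankSat_subgeometrySystem [Fintype K] [Fintype L] (hL : 2 ≤ finrank K L) :
    IsRankSat K (subgeometrySystem c b) (finrank K L - 1) :=
  ⟨rkCovers_subgeometrySystem c b hL, fun _ hr hcov =>
    not_rkCovers_subgeometrySystem c b hL (hcov.mono (by omega))⟩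

end System

theorem sMin_finrank_finrank_sub_one [Fintype K] [Fintype L] (hL : 2 ≤ finrank K L) :
    sMin K L (finrank K L) (finrank K L - 1) = finrank K L + 1 := by
  set m := finrank K L
  set c := Module.finBasis K L
  set U := subgeometrySystem c (Pi.basisFun L (Fin m))
  have hU : finrank K U ∈ {n | ∃ U : Submodule K (Fin m → L), finrank K U = n ∧
      span L (U : Set (Fin m → L)) = ⊤ ∧ IsRankSat K U (m - 1)} :=
    ⟨U, rfl, span_subgeometrySystem _ _, isRankSat_subgeometrySystem _ _ hL⟩
  refine le_antisymm ((Nat.sInf_le hU).trans (finrank_subgeometrySystem_le _ _))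
    (le_csInf ⟨_, hU⟩ ?_)
  rintro n ⟨U', rfl, hspan, hsat⟩
  have h1 : m ≤ finrank K U' := by simpa using finrank_le_finrank_of_span_eq_top hspan
  have h2 : finrank K U' ≠ m := fun h => not_rkCovers_of_finrank_eq c h hspan hsat.1
  omega

end

theorem sMin_two_r_general (K L : Type*) [Field K] [Field L] [Algebra K L]
    [Fintype K] [Fintype L] {r : ℕ}
    (hm : Module.finrank K L = 2 * r) :
    sMin K L (2 * r) (2 * r - 1) = 2 * r + 1 := by
  have := Module.finrank_pos (R := K) (M := L)
  rw [← hm]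
  exact sMin_finrank_finrank_sub_one (by omega)

/-- For all `r ≥ 2` and every prime power `q`: `s_{q^{2r}/q}(2r, 2r-1) = 2r + 1`. -/
theorem sMin_two_r (K L : Type*) [Field K] [Field L] [Algebra K L]
    [Fintype K] [Fintype L] {r : ℕ}
    (hr : 2 ≤ r) (hm : Module.finrank K L = 2 * r) :
    sMin K L (2 * r) (2 * r - 1) = 2 * r + 1 :=
  sMin_two_r_general K L hm
end
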